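/- arXiv:1811.12605 — 8 statements merged into one kernel-verified Lean document; each statement's English description precedes it below -/
import Mathlib

section
/- Fix integers T ≥ 1 and M ≥ 1, and for t ∈ ℤ let π(t) = max{kT : k ∈ ℤ, kT + M ≤ t} and I(t) = t − π(t). Then for every starting time t₀ ∈ ℤ, the time-averages (1/N)·Σ_{t=t₀}^{t₀+N−1} I(t) converge, as N → ∞, to M + (T − 1)/2 (this is the average-AoI half of the paper's Lemma 2, Λ_a(f) = 𝓜(f) + (𝓣(f) − 1)/2). -/
/-!
Since `π t = ⌊(t - M) / T⌋ * T`, the age is `I t = M + (t - M) mod T`, a `T`-periodic sequence.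
The Cesàro means of a periodic sequence converge to its mean over one period, because the partial
sums minus `N` times that mean form a periodic, hence bounded, sequence. Over one period the
residues `(t - M) mod T` run through `0, …, T - 1`, so the mean is `M + (T - 1) / 2`.
-/

open Finset Filter Topology Function

namespace Function.Periodic

theorem sum_range_comp_add {M : Type*} [AddCommMonoid M] {f : ℕ → M} {p : ℕ}
    (hf : Periodic f p) (n : ℕ) : ∑ j ∈ range p, f (n + j) = ∑ j ∈ range p, f j :=
  calc ∑ j ∈ range p, f (n + j) = ∑ j ∈ Ico n (n + p), f (j % p) := by
        rw [sum_Ico_eq_sum_range, Nat.add_sub_cancel_left]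
        exact sum_congr rfl fun j _ => (hf.map_mod_nat _).symm
    _ = ∑ j ∈ range p, f j := by
        rw [sum_eq_multiset_sum, ← Function.comp_def f, ← Multiset.map_map]
        exact congrArg (fun s => (s.map f).sum) (Nat.multiset_Ico_map_mod n p)

theorem bddAbove_range_nat {α : Type*} [Preorder α] [IsDirectedOrder α] [Nonempty α]
    {g : ℕ → α} {p : ℕ} (hg : Periodic g p) (hp : 0 < p) : BddAbove (Set.range g) := by
  refine ((Set.finite_Iio p).image g).bddAbove.mono ?_
  rintro _ ⟨N, rfl⟩
  exact ⟨N % p, Nat.mod_lt N hp, hg.map_mod_nat N⟩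

variable {f : ℕ → ℝ} {p : ℕ}

theorem sum_range_sub_mul_periodic (hf : Periodic f p) :
    Periodic (fun N : ℕ => ∑ j ∈ range N, f j - N * ((∑ j ∈ range p, f j) / p)) p := by
  intro N
  rcases p.eq_zero_or_pos with rfl | hp
  · simp
  dsimp only
  rw [sum_range_add, hf.sum_range_comp_add N]
  push_cast
  field_simp
  ring

theorem tendsto_sum_range_div (hf : Periodic f p) (hp : 0 < p) :
    Tendsto (fun N : ℕ => (∑ j ∈ range N, f j) / N) atTop (𝓝 ((∑ j ∈ range p, f j) / p)) := by
  set a := (∑ j ∈ range p, f j) / p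
  obtain ⟨C, hC⟩ := (hf.sum_range_sub_mul_periodic.comp abs).bddAbove_range_nat hp
  have hdev : Tendsto (fun N : ℕ => (∑ j ∈ range N, f j - N * a) / N) atTop (𝓝 0) := by
    refine squeeze_zero_norm (fun N => ?_) (tendsto_const_div_atTop_nhds_zero_nat C)
    rw [Real.norm_eq_abs, abs_div, Nat.abs_cast]
    exact div_le_div_of_nonneg_right (hC ⟨N, rfl⟩) N.cast_nonneg
  refine (add_zero a ▸ hdev.const_add a).congr' ?_
  filter_upwards [eventually_ne_atTop 0] with N hN
  field_simp
  ring

end Function.Periodic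

theorem Int.isGreatest_ediv_mul {T : ℤ} (hT : 0 < T) (M t : ℤ) :
    IsGreatest {x : ℤ | ∃ k : ℤ, x = k * T ∧ k * T + M ≤ t} ((t - M) / T * T) := by
  refine ⟨⟨(t - M) / T, rfl, by linarith [Int.ediv_mul_le (t - M) hT.ne']⟩, ?_⟩
  rintro _ ⟨k, rfl, hk⟩
  exact mul_le_mul_of_nonneg_right ((Int.le_ediv_iff_mul_le hT).2 (by linarith)) hT.le

theorem Int.periodic_add_emod (a : ℤ) (p : ℕ) : Periodic (fun j : ℕ => (a + j) % (p : ℤ)) p :=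
  fun j => by simp only [Nat.cast_add, ← add_assoc, Int.add_emod_right]

theorem Int.sum_range_add_emod (a : ℤ) (p : ℕ) :
    ∑ j ∈ Finset.range p, (a + j) % (p : ℤ) = ∑ j ∈ Finset.range p, (j : ℤ) := by
  rcases p.eq_zero_or_pos with rfl | hp
  · simp
  -- shifting by `(-a) % p` turns the offset `a` into a multiple of `p`
  rw [← (Int.periodic_add_emod a p).sum_range_comp_add ((-a) % p).toNat]
  refine sum_congr rfl fun j hj => ?_
  rw [Nat.cast_add, Int.toNat_of_nonneg (Int.emod_nonneg _ (by omega)), Int.emod_def (-a),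
    show a + (-a - p * (-a / p) + j) = j + p * -(-a / p) by ring, Int.add_mul_emod_self_left]
  exact Int.emod_eq_of_lt j.cast_nonneg (by simpa using hj)

theorem Finset.sum_range_natCast_mul_two {R : Type*} [CommRing R] (n : ℕ) :
    (∑ j ∈ range n, (j : R)) * 2 = n * (n - 1) := by
  induction n with
  | zero => simp
  | succ n ih => rw [sum_range_succ, add_mul, ih]; push_cast; ring

theorem stmt_2_general (T M : ℤ) (hT : 1 ≤ T)
    (π : ℤ → ℤ)
    (hπ : ∀ t : ℤ, IsGreatest {x : ℤ | ∃ k : ℤ, x = k * T ∧ k * T + M ≤ t} (π t))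
    (I : ℤ → ℤ) (hI : ∀ t : ℤ, I t = t - π t) :
    ∀ t₀ : ℤ, Filter.Tendsto
      (fun N : ℕ => (∑ j ∈ Finset.range N, (I (t₀ + (j : ℤ)) : ℝ)) / (N : ℝ))
      Filter.atTop (nhds ((M : ℝ) + ((T : ℝ) - 1) / 2)) := by
  intro t₀
  lift T to ℕ using by omega
  have hI_emod (j : ℕ) : I (t₀ + j) = M + (t₀ - M + j) % (T : ℤ) := by
    rw [hI, (hπ _).unique (Int.isGreatest_ediv_mul (by omega) M _),
      add_sub_right_comm t₀ (j : ℤ) M, Int.emod_def]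
    ring
  have hper : Periodic (fun j : ℕ => (I (t₀ + j) : ℝ)) T := fun j => by
    simp only [hI_emod, (Int.periodic_add_emod _ T) j]
  have havg : (∑ j ∈ range T, (I (t₀ + j) : ℝ)) / T = M + (T - 1) / 2 := by
    simp only [hI_emod, Int.cast_add, sum_add_distrib, sum_const, card_range, nsmul_eq_mul]
    rw [← Int.cast_sum, Int.sum_range_add_emod]
    push_cast
    have hT0 : (T : ℝ) ≠ 0 := by exact_mod_cast (by omega : T ≠ 0)
    field_simp
    linarith [sum_range_natCast_mul_two (R := ℝ) T]
  simpa [havg] using hper.tendsto_sum_range_div (by omega)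

/-- Average-AoI half of Lemma 2: with `π t = max {k*T : k ∈ ℤ, k*T + M ≤ t}` and
`I t = t - π t`, for every starting time `t₀` the averages
`(1/N) * ∑_{t = t₀}^{t₀ + N - 1} I t` converge, as `N → ∞`, to `M + (T - 1)/2`. -/
theorem stmt_2 (T M : ℤ) (hT : 1 ≤ T) (hM : 1 ≤ M)
    (π : ℤ → ℤ)
    (hπ : ∀ t : ℤ, IsGreatest {x : ℤ | ∃ k : ℤ, x = k * T ∧ k * T + M ≤ t} (π t))
    (I : ℤ → ℤ) (hI : ∀ t : ℤ, I t = t - π t) :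
    ∀ t₀ : ℤ, Filter.Tendsto
      (fun N : ℕ => (∑ j ∈ Finset.range N, (I (t₀ + (j : ℤ)) : ℝ)) / (N : ℝ))
      Filter.atTop (nhds ((M : ℝ) + ((T : ℝ) - 1) / 2)) :=
  stmt_2_general T M hT π hπ I hI
end

section
/- Let S be a nonempty finite set of integers with T_min ≤ T ≤ T_max for all T ∈ S, and let M : S → ℝ; set Λ_a(T) = M(T) + (T − 1)/2. If T_a ∈ S minimizes Λ_a over S and T_m ∈ S minimizes M over S, then T_a ≤ T_m. (In throughput language this is the second half of the paper's Lemma 3: every average-AoI-optimal throughput R_a satisfies R_a ≥ R_m for every maximum-delay-optimal throughput R_m, i.e., min R_a ≥ max R_m.) -/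
theorem stmt_4_general (S : Finset ℤ)
    (M : ℤ → ℝ) (Ta Tm : ℤ) (hTa : Ta ∈ S) (hTm : Tm ∈ S)
    (hTaopt : ∀ T ∈ S, M Ta + ((Ta : ℝ) - 1) / 2 ≤ M T + ((T : ℝ) - 1) / 2)
    (hTmopt : ∀ T ∈ S, M Tm ≤ M T) :
    Ta ≤ Tm := by
  have hAoI := hTaopt Tm hTm
  have hDelay := hTmopt Ta hTa
  exact_mod_cast (by linarith : (Ta : ℝ) ≤ Tm)

/-- Second half of Lemma 3 (in period language): if `T_a` minimizes the average AoI
`Λ_a T = M T + (T - 1)/2` over `S` and `T_m` minimizes the maximum delay `M` over `S`,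
then `T_a ≤ T_m`. -/
theorem stmt_4 (Tmin Tmax : ℤ) (S : Finset ℤ) (hS : S.Nonempty)
    (hrange : ∀ T ∈ S, Tmin ≤ T ∧ T ≤ Tmax)
    (M : ℤ → ℝ) (Ta Tm : ℤ) (hTa : Ta ∈ S) (hTm : Tm ∈ S)
    (hTaopt : ∀ T ∈ S, M Ta + ((Ta : ℝ) - 1) / 2 ≤ M T + ((T : ℝ) - 1) / 2)
    (hTmopt : ∀ T ∈ S, M Tm ≤ M T) :
    Ta ≤ Tm :=
  stmt_4_general S M Ta Tm hTa hTm hTaopt hTmopt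
end

section
/- Let S be a nonempty finite set of integers with T_min ≤ T ≤ T_max for all T ∈ S, and let M : S → ℝ; set Λ_p(T) = M(T) + T − 1 and Λ_a(T) = M(T) + (T − 1)/2. If T_p ∈ S minimizes Λ_p over S and T_a ∈ S minimizes Λ_a over S, then T_p ≤ T_a. (In throughput language this is part 1 of the paper's Lemma 5: every peak-AoI-optimal throughput R_p satisfies R_p ≥ R_a for every average-AoI-optimal throughput R_a, i.e., min R_p ≥ max R_a.) -/
theorem stmt_7_general (S : Finset ℤ)
    (M : ℤ → ℝ) (Tp Ta : ℤ) (hTp : Tp ∈ S) (hTa : Ta ∈ S)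
    (hTpopt : ∀ T ∈ S, M Tp + (Tp : ℝ) - 1 ≤ M T + (T : ℝ) - 1)
    (hTaopt : ∀ T ∈ S, M Ta + ((Ta : ℝ) - 1) / 2 ≤ M T + ((T : ℝ) - 1) / 2) :
    Tp ≤ Ta := by
  have hpeak := hTpopt Ta hTa
  have havg := hTaopt Tp hTp
  -- Adding the two inequalities cancels `M` and leaves `(Tp - Ta) / 2 ≤ 0`.
  exact_mod_cast (by linarith : (Tp : ℝ) ≤ Ta)

/-- Part 1 of Lemma 5 (period comparison): if `T_p` minimizes the peak AoI
`Λ_p T = M T + T - 1` over `S` and `T_a` minimizes the average AoI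
`Λ_a T = M T + (T - 1)/2` over `S`, then `T_p ≤ T_a`. -/
theorem stmt_7 (Tmin Tmax : ℤ) (S : Finset ℤ) (hS : S.Nonempty)
    (hrange : ∀ T ∈ S, Tmin ≤ T ∧ T ≤ Tmax)
    (M : ℤ → ℝ) (Tp Ta : ℤ) (hTp : Tp ∈ S) (hTa : Ta ∈ S)
    (hTpopt : ∀ T ∈ S, M Tp + (Tp : ℝ) - 1 ≤ M T + (T : ℝ) - 1)
    (hTaopt : ∀ T ∈ S, M Ta + ((Ta : ℝ) - 1) / 2 ≤ M T + ((T : ℝ) - 1) / 2) :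
    Tp ≤ Ta :=
  stmt_7_general S M Tp Ta hTp hTa hTpopt hTaopt
end

section
/- Let S be a nonempty finite set of integers with T_min ≤ T ≤ T_max for all T ∈ S, and let M : S → ℝ; set Λ_p(T) = M(T) + T − 1 and Λ_a(T) = M(T) + (T − 1)/2. If T_p ∈ S minimizes Λ_p over S and T_a ∈ S minimizes Λ_a over S, then M(T_p) ≥ M(T_a). (This is the maximum-delay comparison in part 1 of the paper's Lemma 5: the maximum delay achieved by the peak-AoI-optimal solution is at least that achieved by the average-AoI-optimal solution.) -/
theorem stmt_8_general (S : Finset ℤ)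
    (M : ℤ → ℝ) (Tp Ta : ℤ) (hTp : Tp ∈ S) (hTa : Ta ∈ S)
    (hTpopt : ∀ T ∈ S, M Tp + (Tp : ℝ) - 1 ≤ M T + (T : ℝ) - 1)
    (hTaopt : ∀ T ∈ S, M Ta + ((Ta : ℝ) - 1) / 2 ≤ M T + ((T : ℝ) - 1) / 2) :
    M Ta ≤ M Tp := by
  have hpeak := hTpopt Ta hTa
  have havg := hTaopt Tp hTp
  -- Summing the two optimality inequalities cancels `M`.
  have hperiod : (Tp : ℝ) ≤ Ta := by linarith
  linarith

/-- Part 1 of Lemma 5 (maximum-delay comparison): if `T_p` minimizes the peak AoI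
`Λ_p T = M T + T - 1` over `S` and `T_a` minimizes the average AoI
`Λ_a T = M T + (T - 1)/2` over `S`, then `M T_p ≥ M T_a`. -/
theorem stmt_8 (Tmin Tmax : ℤ) (S : Finset ℤ) (hS : S.Nonempty)
    (hrange : ∀ T ∈ S, Tmin ≤ T ∧ T ≤ Tmax)
    (M : ℤ → ℝ) (Tp Ta : ℤ) (hTp : Tp ∈ S) (hTa : Ta ∈ S)
    (hTpopt : ∀ T ∈ S, M Tp + (Tp : ℝ) - 1 ≤ M T + (T : ℝ) - 1)
    (hTaopt : ∀ T ∈ S, M Ta + ((Ta : ℝ) - 1) / 2 ≤ M T + ((T : ℝ) - 1) / 2) :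
    M Ta ≤ M Tp :=
  stmt_8_general S M Tp Ta hTp hTa hTpopt hTaopt
end

section
/- Let S be a nonempty finite set of integers with T_min ≤ T ≤ T_max for all T ∈ S, and let M : S → ℝ; set Λ_p(T) = M(T) + T − 1 and Λ_a(T) = M(T) + (T − 1)/2. If T_p ∈ S minimizes Λ_p over S and T_a ∈ S minimizes Λ_a over S, then Λ_a(T_p) − Λ_a(T_a) ≤ (T_max − T_min)/2. (This is gap (9) of the paper's Lemma 5: the average AoI at any peak-AoI-optimal throughput exceeds the optimal average AoI by at most D/(2R_l) − D/(2R_u).) -/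
/-! Λ_a(T) = Λ_p(T) − (T − 1)/2, so the average-AoI gap between two periods is their peak-AoI
gap plus half the difference of the periods. At a peak-AoI-optimal `T_p` the first term is
nonpositive against any `T_a`, and the second is at most `(T_max − T_min)/2`. -/

theorem avgAoI_sub_le_of_peakAoI_le (M : ℤ → ℝ) {Tp Ta : ℤ}
    (hpeak : M Tp + (Tp : ℝ) - 1 ≤ M Ta + (Ta : ℝ) - 1) :
    (M Tp + ((Tp : ℝ) - 1) / 2) - (M Ta + ((Ta : ℝ) - 1) / 2) ≤ ((Ta : ℝ) - Tp) / 2 := by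
  linarith

theorem stmt_9_general (Tmin Tmax : ℤ) (S : Finset ℤ)
    (hrange : ∀ T ∈ S, Tmin ≤ T ∧ T ≤ Tmax)
    (M : ℤ → ℝ) (Tp Ta : ℤ) (hTp : Tp ∈ S) (hTa : Ta ∈ S)
    (hTpopt : ∀ T ∈ S, M Tp + (Tp : ℝ) - 1 ≤ M T + (T : ℝ) - 1) :
    (M Tp + ((Tp : ℝ) - 1) / 2) - (M Ta + ((Ta : ℝ) - 1) / 2)
      ≤ ((Tmax : ℝ) - (Tmin : ℝ)) / 2 := by
  have hTa_le : (Ta : ℝ) ≤ Tmax := by exact_mod_cast (hrange Ta hTa).2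
  have hTp_ge : (Tmin : ℝ) ≤ Tp := by exact_mod_cast (hrange Tp hTp).1
  calc (M Tp + ((Tp : ℝ) - 1) / 2) - (M Ta + ((Ta : ℝ) - 1) / 2)
      ≤ ((Ta : ℝ) - Tp) / 2 := avgAoI_sub_le_of_peakAoI_le M (hTpopt Ta hTa)
    _ ≤ ((Tmax : ℝ) - (Tmin : ℝ)) / 2 := by linarith

/-- Gap (9) of Lemma 5: if `T_p` minimizes the peak AoI `Λ_p T = M T + T - 1` over `S`
and `T_a` minimizes the average AoI `Λ_a T = M T + (T - 1)/2` over `S`, then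
`Λ_a T_p - Λ_a T_a ≤ (T_max - T_min)/2`. -/
theorem stmt_9 (Tmin Tmax : ℤ) (S : Finset ℤ) (hS : S.Nonempty)
    (hrange : ∀ T ∈ S, Tmin ≤ T ∧ T ≤ Tmax)
    (M : ℤ → ℝ) (Tp Ta : ℤ) (hTp : Tp ∈ S) (hTa : Ta ∈ S)
    (hTpopt : ∀ T ∈ S, M Tp + (Tp : ℝ) - 1 ≤ M T + (T : ℝ) - 1)
    (hTaopt : ∀ T ∈ S, M Ta + ((Ta : ℝ) - 1) / 2 ≤ M T + ((T : ℝ) - 1) / 2) :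
    (M Tp + ((Tp : ℝ) - 1) / 2) - (M Ta + ((Ta : ℝ) - 1) / 2)
      ≤ ((Tmax : ℝ) - (Tmin : ℝ)) / 2 :=
  stmt_9_general Tmin Tmax S hrange M Tp Ta hTp hTa hTpopt
end

section
/- Let S be a nonempty finite set of integers with T_min ≤ T ≤ T_max for all T ∈ S, and let M : S → ℤ be integer-valued (since all link delays and task activation periods are integers in the slotted transmission model, the minimal maximum delay is an integer); set Λ_p(T) = M(T) + T − 1 and Λ_a(T) = M(T) + (T − 1)/2. If T_p ∈ S minimizes Λ_p over S and T_a ∈ S minimizes Λ_a over S, then Λ_p(T_a) − Λ_p(T_p) ≤ ⌊(T_max − T_min)/2⌋. (This is gap (10) of the paper's Lemma 5: the peak AoI at any average-AoI-optimal throughput exceeds the optimal peak AoI by at most ⌊D/(2R_l) − D/(2R_u)⌋.) -/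
/-! Since `Λ_p T = Λ_a T + (T - 1)/2`, the peak-AoI gap between `T_a` and any `T ∈ S` is the
average-AoI gap, which is `≤ 0` by optimality of `T_a`, plus `(T_a - T)/2 ≤ (T_max - T_min)/2`.
The gap is an integer, so it is also bounded by the floor. -/

theorem peak_sub_peak_le_half_sub_of_avg_le {m m' t t' : ℤ}
    (h : (m : ℝ) + ((t : ℝ) - 1) / 2 ≤ (m' : ℝ) + ((t' : ℝ) - 1) / 2) :
    (((m + t - 1) - (m' + t' - 1) : ℤ) : ℝ) ≤ ((t : ℝ) - t') / 2 := by
  push_cast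
  linarith

theorem stmt_10_general (Tmin Tmax : ℤ) (S : Finset ℤ)
    (hrange : ∀ T ∈ S, Tmin ≤ T ∧ T ≤ Tmax)
    (M : ℤ → ℤ) (Tp Ta : ℤ) (hTp : Tp ∈ S) (hTa : Ta ∈ S)
    (hTaopt : ∀ T ∈ S,
      (M Ta : ℝ) + ((Ta : ℝ) - 1) / 2 ≤ (M T : ℝ) + ((T : ℝ) - 1) / 2) :
    (M Ta + Ta - 1) - (M Tp + Tp - 1) ≤ ⌊((Tmax : ℝ) - (Tmin : ℝ)) / 2⌋ := by
  rw [Int.le_floor]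
  have hgap := peak_sub_peak_le_half_sub_of_avg_le (hTaopt Tp hTp)
  have hTa_le : (Ta : ℝ) ≤ Tmax := by exact_mod_cast (hrange Ta hTa).2
  have hTp_ge : (Tmin : ℝ) ≤ Tp := by exact_mod_cast (hrange Tp hTp).1
  linarith

/-- Gap (10) of Lemma 5: with an integer-valued minimal maximum delay `M : S → ℤ`,
if `T_p` minimizes the peak AoI `Λ_p T = M T + T - 1` over `S` and `T_a` minimizes
the average AoI `Λ_a T = M T + (T - 1)/2` over `S`, then
`Λ_p T_a - Λ_p T_p ≤ ⌊(T_max - T_min)/2⌋`. -/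
theorem stmt_10 (Tmin Tmax : ℤ) (S : Finset ℤ) (hS : S.Nonempty)
    (hrange : ∀ T ∈ S, Tmin ≤ T ∧ T ≤ Tmax)
    (M : ℤ → ℤ) (Tp Ta : ℤ) (hTp : Tp ∈ S) (hTa : Ta ∈ S)
    (hTpopt : ∀ T ∈ S, M Tp + Tp - 1 ≤ M T + T - 1)
    (hTaopt : ∀ T ∈ S,
      (M Ta : ℝ) + ((Ta : ℝ) - 1) / 2 ≤ (M T : ℝ) + ((T : ℝ) - 1) / 2) :
    (M Ta + Ta - 1) - (M Tp + Tp - 1) ≤ ⌊((Tmax : ℝ) - (Tmin : ℝ)) / 2⌋ :=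
  stmt_10_general Tmin Tmax S hrange M Tp Ta hTp hTa hTaopt
end

section
/- Let α ≥ 1 be a real number, let T_min, T_max, T* be integers with 1 ≤ T_min ≤ T* ≤ T_max, and let M*, M_α be real numbers with M* ≥ 1 and M_α ≤ α·M* + T_max − 1. Then M_α + T_max − 1 ≤ (α + 2·T_max/T_min)·(M* + T* − 1). (This is the arithmetic core of the peak-AoI case of the paper's Theorem 2: since the solution returned by the framework run at throughput R_l has peak AoI M_α + D/R_l − 1 while the optimal peak AoI is M* + T* − 1, and since the α-approximation guarantee yields M_α ≤ α·M* + D/R_l − 1, the framework's solution is an (α + 2R_u/R_l)-approximation for minimizing peak AoI, where R_u/R_l = T_max/T_min.) -/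
/-! The approximate solution pays at most `α M* + 2 T_max`, while the optimum pays
`X := M* + T* - 1 ≥ M*`. Since `X ≥ T* ≥ T_min`, the additive `2 T_max` is at most
`(2 T_max / T_min) X`, which turns the additive loss into the multiplicative `2 T_max / T_min`. -/

theorem le_div_mul_of_le {K : Type*} [Field K] [LinearOrder K] [IsStrictOrderedRing K]
    {a b x : K} (ha : 0 ≤ a) (hb : 0 < b) (hbx : b ≤ x) : a ≤ a / b * x := by
  calc a ≤ a * (x / b) := le_mul_of_one_le_right ha ((one_le_div hb).mpr hbx)
    _ = a / b * x := by ring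

/-- Arithmetic core of the peak-AoI case of Theorem 2: if `α ≥ 1`,
`1 ≤ T_min ≤ T* ≤ T_max` are integers, `M* ≥ 1`, and
`M_α ≤ α * M* + T_max - 1`, then
`M_α + T_max - 1 ≤ (α + 2 * T_max / T_min) * (M* + T* - 1)`. -/
theorem stmt_11 (α : ℝ) (hα : 1 ≤ α) (Tmin Tmax Tstar : ℤ)
    (h1 : 1 ≤ Tmin) (h2 : Tmin ≤ Tstar) (h3 : Tstar ≤ Tmax)
    (Mstar Mα : ℝ) (hMstar : 1 ≤ Mstar)
    (hMα : Mα ≤ α * Mstar + (Tmax : ℝ) - 1) :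
    Mα + (Tmax : ℝ) - 1
      ≤ (α + 2 * (Tmax : ℝ) / (Tmin : ℝ)) * (Mstar + (Tstar : ℝ) - 1) := by
  have h1' : (1 : ℝ) ≤ Tmin := by exact_mod_cast h1
  have h2' : (Tmin : ℝ) ≤ Tstar := by exact_mod_cast h2
  have h3' : (Tstar : ℝ) ≤ Tmax := by exact_mod_cast h3
  set X := Mstar + (Tstar : ℝ) - 1
  have hαM : α * Mstar ≤ α * X := mul_le_mul_of_nonneg_left (by linarith) (by linarith)
  have hTmax : 2 * (Tmax : ℝ) ≤ 2 * Tmax / Tmin * X :=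
    le_div_mul_of_le (by linarith) (by linarith) (by linarith)
  calc Mα + (Tmax : ℝ) - 1 ≤ α * X + 2 * Tmax := by linarith
    _ ≤ α * X + 2 * Tmax / Tmin * X := by linarith
    _ = (α + 2 * (Tmax : ℝ) / Tmin) * X := by ring
end

section
/- Let α ≥ 1 be a real number, let T_min, T_max, T* be integers with 1 ≤ T_min ≤ T* ≤ T_max, and let M*, M_α be real numbers with M* ≥ 1 and M_α ≤ α·M* + T_max − 1. Then M_α + (T_max − 1)/2 ≤ (α + 3·T_max/T_min)·(M* + (T* − 1)/2). (This is the arithmetic core of the average-AoI case of the paper's Theorem 2: since the framework's solution has average AoI M_α + (D/R_l − 1)/2 while the optimal average AoI is M* + (T* − 1)/2, the framework's solution is an (α + 3R_u/R_l)-approximation for minimizing average AoI, where R_u/R_l = T_max/T_min.) -/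
/-!
The optimal average age `M* + (T* - 1)/2` is at least `T*/2 ≥ T_min/2` because `M* ≥ 1`, so
`(3 T_max / T_min)` times it is at least `3 T_max / 2`, which pays for the `3 (T_max - 1)/2` by
which the framework's average age can exceed `α M*`; the remaining `α M*` is at most `α` times
the optimal average age.
-/

lemma half_le_div_mul_of_half_le {K : Type*} [Field K] [LinearOrder K] [IsStrictOrderedRing K]
    {a b s : K} (ha : 0 ≤ a) (hb : 0 < b) (hs : b / 2 ≤ s) : a / 2 ≤ a / b * s :=
  calc a / 2 = a / b * (b / 2) := by field_simp
    _ ≤ a / b * s := mul_le_mul_of_nonneg_left hs (div_nonneg ha hb.le)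

/-- Arithmetic core of the average-AoI case of Theorem 2: if `α ≥ 1`,
`1 ≤ T_min ≤ T* ≤ T_max` are integers, `M* ≥ 1`, and
`M_α ≤ α * M* + T_max - 1`, then
`M_α + (T_max - 1)/2 ≤ (α + 3 * T_max / T_min) * (M* + (T* - 1)/2)`. -/
theorem stmt_12 (α : ℝ) (hα : 1 ≤ α) (Tmin Tmax Tstar : ℤ)
    (h1 : 1 ≤ Tmin) (h2 : Tmin ≤ Tstar) (h3 : Tstar ≤ Tmax)
    (Mstar Mα : ℝ) (hMstar : 1 ≤ Mstar)
    (hMα : Mα ≤ α * Mstar + (Tmax : ℝ) - 1) :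
    Mα + ((Tmax : ℝ) - 1) / 2
      ≤ (α + 3 * (Tmax : ℝ) / (Tmin : ℝ)) * (Mstar + ((Tstar : ℝ) - 1) / 2) := by
  have h1' : (1 : ℝ) ≤ Tmin := by exact_mod_cast h1
  have h2' : (Tmin : ℝ) ≤ Tstar := by exact_mod_cast h2
  have h3' : (Tstar : ℝ) ≤ Tmax := by exact_mod_cast h3
  set S := Mstar + ((Tstar : ℝ) - 1) / 2 with hS
  have hMstar_le : Mstar ≤ S := by linarith
  have hTmin_le : (Tmin : ℝ) / 2 ≤ S := by linarith
  calc Mα + ((Tmax : ℝ) - 1) / 2 ≤ α * Mstar + 3 * (Tmax : ℝ) / 2 := by linarith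
    _ ≤ α * S + 3 * (Tmax : ℝ) / Tmin * S :=
      add_le_add (mul_le_mul_of_nonneg_left hMstar_le (by linarith))
        (half_le_div_mul_of_half_le (by linarith) (by linarith) hTmin_le)
    _ = (α + 3 * (Tmax : ℝ) / Tmin) * S := by ring
end
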